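/- Let σ be a partition of the primes and let G be a finite σ-full group in which σ-permutability is transitive (a PσT-group). Then for every normal subgroup R of G and every i, the quotient G/R satisfies N_{σ_i}: whenever N is a soluble normal subgroup of G/R, every σ_i'-element of G/R induces a power automorphism on O_{σ_i}((G/R)/N). -/

import Mathlib

open Subgroup
open scoped Pointwise

section Defs

variable {ι : Type*}

/-- `σ` is a partition of the set of all primes. -/
structure IsPrimePartition (σ : ι → Set ℕ) : Prop where
  prime_of_mem : ∀ i p, p ∈ σ i → p.Prime
  existsUnique_mem : ∀ p : ℕ, p.Prime → ∃! i, p ∈ σ i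

/-- every prime dividing `n` lies in the block `σ i`. -/
def IsSigmaNumber (σ : ι → Set ℕ) (i : ι) (n : ℕ) : Prop :=
  ∀ p : ℕ, p.Prime → p ∣ n → p ∈ σ i

/-- `G` is a `σ i`-group. -/
def IsSigmaIGroup (σ : ι → Set ℕ) (i : ι) (G : Type*) [Group G] : Prop :=
  IsSigmaNumber σ i (Nat.card G)

/-- `G` is σ-primary: it is a `σ i`-group for some `i`. -/
def IsSigmaPrimary (σ : ι → Set ℕ) (G : Type*) [Group G] : Prop :=
  ∃ i, IsSigmaIGroup σ i G

/-- `G` is σ-nilpotent: `G` is the internal direct product of normal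
σ-primary subgroups (one `σ i`-subgroup for each block). -/
def IsSigmaNilpotent (σ : ι → Set ℕ) (G : Type*) [Group G] : Prop :=
  ∃ H : ι → Subgroup G, (∀ i, (H i).Normal) ∧ (∀ i, IsSigmaIGroup σ i ↥(H i)) ∧
    iSupIndep H ∧ iSup H = ⊤

/-- One step in a σ-subnormal chain: `A ≤ B` and either `A` is normal in `B` or
`B/(A_B)` (quotient by the normal core of `A` in `B`) is σ-primary. -/
def SigmaSubnormalStep (σ : ι → Set ℕ) {G : Type*} [Group G] (A B : Subgroup G) : Prop :=
  A ≤ B ∧ (((A.subgroupOf B).Normal) ∨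
    IsSigmaPrimary σ (↥B ⧸ (A.subgroupOf B).normalCore))

/-- `A` is σ-subnormal in `G`. -/
def IsSigmaSubnormal (σ : ι → Set ℕ) {G : Type*} [Group G] (A : Subgroup G) : Prop :=
  ∃ n, ∃ C : Fin (n + 1) → Subgroup G, C 0 = A ∧ C (Fin.last n) = ⊤ ∧
    ∀ k : Fin n, SigmaSubnormalStep σ (C k.castSucc) (C k.succ)

/-- `A` is subnormal in `G`. -/
def IsSubnormalSub {G : Type*} [Group G] (A : Subgroup G) : Prop :=
  ∃ n, ∃ C : Fin (n + 1) → Subgroup G, C 0 = A ∧ C (Fin.last n) = ⊤ ∧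
    ∀ k : Fin n, C k.castSucc ≤ C k.succ ∧ ((C k.castSucc).subgroupOf (C k.succ)).Normal

/-- `M` is a modular subgroup of `G`: a modular element of the subgroup lattice. -/
def IsModularSubgroup {G : Type*} [Group G] (M : Subgroup G) : Prop :=
  (∀ X Z : Subgroup G, X ≤ Z → X ⊔ (M ⊓ Z) = (X ⊔ M) ⊓ Z) ∧
  (∀ Y Z : Subgroup G, M ≤ Z → M ⊔ (Y ⊓ Z) = (M ⊔ Y) ⊓ Z)

/-- `A` is submodular in `G`: there is a chain from `A` to `G` with each
term modular in the next. -/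
def IsSubmodular {G : Type*} [Group G] (A : Subgroup G) : Prop :=
  ∃ n, ∃ C : Fin (n + 1) → Subgroup G, C 0 = A ∧ C (Fin.last n) = ⊤ ∧
    ∀ k : Fin n, C k.castSucc ≤ C k.succ ∧
      IsModularSubgroup ((C k.castSucc).subgroupOf (C k.succ))

/-- `H` is a Hall `σ i`-subgroup of `G`. -/
def IsHallSigmaI (σ : ι → Set ℕ) (i : ι) {G : Type*} [Group G] (H : Subgroup G) : Prop :=
  IsSigmaNumber σ i (Nat.card H) ∧ ∀ p : ℕ, p.Prime → p ∣ H.index → p ∉ σ i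

/-- `G` is σ-full: it has a Hall `σ i`-subgroup for every `σ i ∈ σ(G)`. -/
def IsSigmaFull (σ : ι → Set ℕ) (G : Type*) [Group G] : Prop :=
  ∀ i, (∃ p : ℕ, p.Prime ∧ p ∈ σ i ∧ p ∣ Nat.card G) →
    ∃ H : Subgroup G, IsHallSigmaI σ i H

/-- Two subgroups permute. -/
def Permutes {G : Type*} [Group G] (A B : Subgroup G) : Prop :=
  (A : Set G) * (B : Set G) = (B : Set G) * (A : Set G)

/-- `A` is σ-permutable in `G`: it permutes with every Hall `σ i`-subgroup of `G`
(hence with all their conjugates). -/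
def IsSigmaPermutable (σ : ι → Set ℕ) {G : Type*} [Group G] (A : Subgroup G) : Prop :=
  ∀ i, ∀ H : Subgroup G, IsHallSigmaI σ i H → Permutes A H

/-- `A` is quasinormal (permutable) in `G`. -/
def IsQuasinormal {G : Type*} [Group G] (A : Subgroup G) : Prop :=
  ∀ B : Subgroup G, Permutes A B

/-- `A` is σ-quasinormal in `G`: modular and σ-subnormal. -/
def IsSigmaQuasinormal (σ : ι → Set ℕ) {G : Type*} [Group G] (A : Subgroup G) : Prop :=
  IsModularSubgroup A ∧ IsSigmaSubnormal σ A

/-- σ-permutability is a transitive relation on `G`. -/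
def IsPSigmaTGroup (σ : ι → Set ℕ) (G : Type*) [Group G] : Prop :=
  ∀ K H : Subgroup G, H ≤ K → IsSigmaPermutable σ (H.subgroupOf K) →
    IsSigmaPermutable σ K → IsSigmaPermutable σ H

/-- `H/K` is a chief factor of `G`. -/
def IsChiefFactor (G : Type*) [Group G] (K H : Subgroup G) : Prop :=
  K.Normal ∧ H.Normal ∧ K < H ∧
    ∀ N : Subgroup G, N.Normal → K ≤ N → N ≤ H → N = K ∨ N = H

/-- `G` is σ-soluble: every chief factor of `G` is σ-primary. -/
def IsSigmaSoluble (σ : ι → Set ℕ) (G : Type*) [Group G] : Prop :=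
  ∀ K H : Subgroup G, ∀ hc : IsChiefFactor G K H,
    letI := hc.1; IsSigmaPrimary σ (↥H ⧸ K.subgroupOf H)

/-- The σ-nilpotent residual `G^{𝔑_σ}` of `G`. -/
def sigmaNilpotentResidual (σ : ι → Set ℕ) (G : Type*) [Group G] : Subgroup G :=
  sInf {N : Subgroup G | ∃ h : N.Normal, letI := h; IsSigmaNilpotent σ (G ⧸ N)}

/-- The σ-soluble residual `G^{𝔖_σ}` of `G`. -/
def sigmaSolubleResidual (σ : ι → Set ℕ) (G : Type*) [Group G] : Subgroup G :=
  sInf {N : Subgroup G | ∃ h : N.Normal, letI := h; IsSigmaSoluble σ (G ⧸ N)}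

/-- `G` is a σ-SC-group: every chief factor of `G` below `G^{𝔑_σ}` is simple. -/
def IsSigmaSCGroup (σ : ι → Set ℕ) (G : Type*) [Group G] : Prop :=
  ∀ K H : Subgroup G, ∀ hc : IsChiefFactor G K H, H ≤ sigmaNilpotentResidual σ G →
    letI := hc.1; IsSimpleGroup (↥H ⧸ K.subgroupOf H)

/-- `G` is σ-supersoluble: every chief factor of `G` below `G^{𝔑_σ}` is cyclic. -/
def IsSigmaSupersoluble (σ : ι → Set ℕ) (G : Type*) [Group G] : Prop :=
  ∀ K H : Subgroup G, ∀ hc : IsChiefFactor G K H, H ≤ sigmaNilpotentResidual σ G →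
    letI := hc.1; IsCyclic (↥H ⧸ K.subgroupOf H)

/-- The σ-supersoluble residual `G^{𝔘_σ}` of `G`. -/
def sigmaSupersolubleResidual (σ : ι → Set ℕ) (G : Type*) [Group G] : Subgroup G :=
  sInf {N : Subgroup G | ∃ h : N.Normal, letI := h; IsSigmaSupersoluble σ (G ⧸ N)}

/-- The soluble radical `G_𝔖`: the largest soluble normal subgroup of `G`. -/
def solubleRadical (G : Type*) [Group G] : Subgroup G :=
  sSup {N : Subgroup G | N.Normal ∧ IsSolvable ↥N}

/-- `O_{σ i}(G)`: the largest normal `σ i`-subgroup of `G`. -/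
def sigmaCore (σ : ι → Set ℕ) (i : ι) (G : Type*) [Group G] : Subgroup G :=
  sSup {N : Subgroup G | N.Normal ∧ IsSigmaIGroup σ i ↥N}

/-- `O^{σ i}(G)`: the smallest normal subgroup of `G` with `σ i`-quotient. -/
def sigmaIResidual (σ : ι → Set ℕ) (i : ι) (G : Type*) [Group G] : Subgroup G :=
  sInf {N : Subgroup G | ∃ h : N.Normal, letI := h; IsSigmaIGroup σ i (G ⧸ N)}

end Defs


/-- `X` satisfies `N_{σ i}`: whenever `N` is a soluble normal subgroup of `X`,
every `σ i'`-element of `X` induces a power automorphism on `O_{σ i}(X/N)`. -/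
def SatisfiesNSigma {ι : Type*} (σ : ι → Set ℕ) (i : ι) (X : Type*) [Group X] : Prop :=
  ∀ N : Subgroup X, ∀ hN : N.Normal, IsSolvable ↥N →
    ∀ x : X, (∀ p : ℕ, p.Prime → p ∣ orderOf x → p ∉ σ i) →
      letI := hN;
      ∀ a : X ⧸ N, a ∈ sigmaCore σ i (X ⧸ N) →
        (QuotientGroup.mk' N x) * a * (QuotientGroup.mk' N x)⁻¹ ∈ Subgroup.zpowers a

/-!
Let `π : G → Q = (G/R)/N`, `D = O_{σ_i}(Q)` and `a ∈ D`. The preimage `A = π⁻¹⟨a⟩` lies in the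
normal subgroup `π⁻¹D`, over which its core has `σ_i`-index, so one application of the PσT property
makes `A` σ-permutable. If `L` is a Hall `σ_j`-subgroup with `j ≠ i`, then `π L` permutes with `⟨a⟩`
and meets `D` trivially; writing `b a = a^k b'` with `b, b' ∈ π L` gives `b' b⁻¹ ∈ D ∩ π L = 1`, so
`π L` normalizes `⟨a⟩`. Hence the normal closure `T` of all such `L` normalizes `A`. By σ-fullness
`G/T` is a `σ_i`-group, so every `σ_i'`-element of `G/R` lies in the image of `T`.
-/

section SigmaNumbers

variable {ι : Type*} {σ : ι → Set ℕ} {i j : ι} {m n : ℕ}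

def IsSigmaComplNumber (σ : ι → Set ℕ) (i : ι) (n : ℕ) : Prop :=
  ∀ p : ℕ, p.Prime → p ∣ n → p ∉ σ i

theorem IsPrimePartition.eq_of_mem (hσ : IsPrimePartition σ) {p : ℕ} (hi : p ∈ σ i)
    (hj : p ∈ σ j) : i = j :=
  (hσ.existsUnique_mem p (hσ.prime_of_mem i p hi)).unique hi hj

theorem IsSigmaNumber.of_dvd (h : IsSigmaNumber σ i n) (hmn : m ∣ n) : IsSigmaNumber σ i m :=
  fun p hp hpm => h p hp (hpm.trans hmn)

theorem IsSigmaComplNumber.of_dvd (h : IsSigmaComplNumber σ i n) (hmn : m ∣ n) :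
    IsSigmaComplNumber σ i m :=
  fun p hp hpm => h p hp (hpm.trans hmn)

theorem IsSigmaNumber.isSigmaComplNumber (hσ : IsPrimePartition σ) (h : IsSigmaNumber σ j n)
    (hji : j ≠ i) : IsSigmaComplNumber σ i n :=
  fun p hp hpn hpi => hji (hσ.eq_of_mem (h p hp hpn) hpi)

theorem IsSigmaNumber.coprime (h : IsSigmaNumber σ i m) (h' : IsSigmaComplNumber σ i n) :
    m.Coprime n :=
  Nat.coprime_of_dvd fun p hp hpm hpn => h' p hp hpn (h p hp hpm)

end SigmaNumbers

section Subgroups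

variable {ι : Type*} {σ : ι → Set ℕ} {i j : ι} {G Q : Type*} [Group G] [Group Q]

theorem IsSigmaIGroup.sup {H N : Subgroup G} [N.Normal] (hH : IsSigmaIGroup σ i H)
    (hN : IsSigmaIGroup σ i N) : IsSigmaIGroup σ i ↥(H ⊔ N) := by
  have hcard : Nat.card ↥(H ⊔ N) = Nat.card N * N.relIndex H := by
    rw [← relIndex_sup_right, ← (N.subgroupOf (H ⊔ N)).card_mul_index,
      Nat.card_congr (subgroupOfEquivOfLe le_sup_right).toEquiv]
    rfl
  intro p hp hpd
  rw [hcard] at hpd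
  rcases hp.dvd_mul.1 hpd with h | h
  · exact hN p hp h
  · exact hH p hp (h.trans (N.relIndex_dvd_card H))

theorem normal_and_isSigmaIGroup_sigmaCore [Finite G] :
    (sigmaCore σ i G).Normal ∧ IsSigmaIGroup σ i (sigmaCore σ i G) := by
  let s := {N : Subgroup G | N.Normal ∧ IsSigmaIGroup σ i N}
  have hs : s.Finite := Set.toFinite s
  refine Set.Finite.induction_on_subset s hs
    (motive := fun t _ =>
      (sSup t : Subgroup G).Normal ∧ IsSigmaIGroup σ i ↥(sSup t : Subgroup G)) ?_ ?_
  · rw [sSup_empty]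
    refine ⟨inferInstance, fun p hp hpd => ?_⟩
    rw [card_bot, Nat.dvd_one] at hpd
    exact absurd hpd hp.ne_one
  · rintro N t ⟨hNn, hNσ⟩ - - ⟨hTn, hTσ⟩
    rw [sSup_insert]
    exact ⟨sup_normal N (sSup t), hNσ.sup hTσ⟩

theorem IsHallSigmaI.map_equiv {L : Subgroup G} (hL : IsHallSigmaI σ i L) (e : G ≃* Q) :
    IsHallSigmaI σ i (L.map (e : G →* Q)) :=
  ⟨by rw [card_map_of_injective e.injective]; exact hL.1, by rw [index_map_equiv]; exact hL.2⟩

theorem mem_of_isSigmaNumber_index [Finite G] {M : Subgroup G} [M.Normal]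
    (hM : IsSigmaNumber σ i M.index) {x : G} (hx : IsSigmaComplNumber σ i (orderOf x)) :
    x ∈ M := by
  rw [← QuotientGroup.eq_one_iff, ← orderOf_eq_one_iff]
  refine Nat.eq_one_of_dvd_coprimes (hM.coprime hx) ?_ (orderOf_map_dvd (QuotientGroup.mk' M) x)
  rw [index_eq_card]
  exact orderOf_dvd_natCard _

end Subgroups

section Permutability

variable {ι : Type*} {σ : ι → Set ℕ} {i j : ι} {G Q : Type*} [Group G] [Group Q]

theorem permutes_of_le_normalizer {A B : Subgroup G} (h : B ≤ normalizer (A : Set G)) :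
    Permutes A B := by
  rw [Permutes, ← coe_mul_of_right_le_normalizer_left A B h,
    ← coe_mul_of_left_le_normalizer_right B A h, sup_comm]

theorem permutes_of_normal_le_of_sup_eq_top {A B C : Subgroup G} [C.Normal] (hCA : C ≤ A)
    (h : C ⊔ B = ⊤) : Permutes A B := by
  have hAB : (A : Set G) * (B : Set G) = Set.univ := Set.eq_univ_of_univ_subset <| by
    rw [← coe_top, ← h, normal_mul]
    exact Set.mul_subset_mul_right hCA
  have hBA : (B : Set G) * (A : Set G) = Set.univ := Set.eq_univ_of_univ_subset <| by
    rw [← coe_top, ← h, sup_comm, mul_normal]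
    exact Set.mul_subset_mul_left hCA
  rw [Permutes, hAB, hBA]

theorem Permutes.map {A B : Subgroup G} (h : Permutes A B) (f : G →* Q) :
    Permutes (A.map f) (B.map f) := by
  rw [Permutes, coe_map, coe_map, ← Set.image_mul, ← Set.image_mul, h]

theorem le_normalizer_of_permutes {A B D : Subgroup G} [D.Normal] (hAD : A ≤ D)
    (hDB : Disjoint D B) (h : Permutes A B) : B ≤ normalizer (A : Set G) := by
  have hconj : ∀ b ∈ B, ∀ a ∈ A, b * a * b⁻¹ ∈ A := by
    intro b hb a ha
    obtain ⟨a', ha', b', hb', hba⟩ : b * a ∈ (A : Set G) * (B : Set G) :=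
      h ▸ Set.mul_mem_mul hb ha
    have hb'b : b' * b⁻¹ = a'⁻¹ * (b * a * b⁻¹) := by rw [← hba]; group
    have hD : b' * b⁻¹ ∈ D ⊓ B := by
      refine ⟨?_, B.mul_mem hb' (B.inv_mem hb)⟩
      rw [hb'b]
      exact D.mul_mem (D.inv_mem (hAD ha')) (‹D.Normal›.conj_mem a (hAD ha) b)
    rw [hDB.eq_bot, mem_bot, hb'b, inv_mul_eq_one] at hD
    exact hD ▸ ha'
  intro b hb
  rw [mem_normalizer_iff]
  refine fun a => ⟨hconj b hb a, fun ha => ?_⟩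
  simpa [mul_assoc] using hconj b⁻¹ (B.inv_mem hb) _ ha

theorem isSigmaPermutable_of_normal {A : Subgroup G} [A.Normal] : IsSigmaPermutable σ A :=
  fun _ _ _ => permutes_of_le_normalizer (by rw [normalizer_eq_top_iff.2 ‹_›]; exact le_top)

theorem isSigmaPermutable_of_isSigmaIGroup_quotient_normalCore (hσ : IsPrimePartition σ)
    [Finite G] {A : Subgroup G} (hA : IsSigmaIGroup σ i (G ⧸ A.normalCore)) :
    IsSigmaPermutable σ A := by
  intro j L hL
  obtain rfl | hji := eq_or_ne j i
  · have hcore : IsSigmaNumber σ j A.normalCore.index := by rwa [index_eq_card]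
    refine permutes_of_normal_le_of_sup_eq_top A.normalCore_le ?_
    rw [← index_eq_one]
    exact Nat.eq_one_of_dvd_coprimes (hcore.coprime hL.2) (index_dvd_of_le le_sup_left)
      (index_dvd_of_le le_sup_right)
  · have hmap : L.map (QuotientGroup.mk' A.normalCore) = ⊥ := by
      rw [← card_eq_one]
      exact Nat.eq_one_of_dvd_coprimes (hA.coprime (hL.1.isSigmaComplNumber hσ hji))
        (card_subgroup_dvd_card _) (card_map_dvd _ _)
    rw [Subgroup.map_eq_bot_iff, QuotientGroup.ker_mk'] at hmap
    exact permutes_of_le_normalizer ((hmap.trans A.normalCore_le).trans le_normalizer)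

end Permutability

section HallClosure

variable {ι : Type*} {σ : ι → Set ℕ} {i j : ι} {G Q : Type*} [Group G] [Group Q]

/-- `π⁻¹ A ≤ π⁻¹ D ⊴ G`, and `π⁻¹ D / core(π⁻¹ A)` is a quotient of `π(π⁻¹ D) ≤ D`. -/
theorem IsPSigmaTGroup.isSigmaPermutable_comap [Finite G] (hσ : IsPrimePartition σ)
    (hPT : IsPSigmaTGroup σ G) (π : G →* Q) {D : Subgroup Q} [D.Normal]
    (hD : IsSigmaIGroup σ i D) {A : Subgroup Q} (hAD : A ≤ D) :
    IsSigmaPermutable σ (A.comap π) := by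
  set E := D.comap π
  have hker : (π.comp E.subtype).ker ≤ ((A.comap π).subgroupOf E).normalCore := by
    refine normal_le_normalCore.2 fun e he => ?_
    rw [MonoidHom.mem_ker] at he
    exact mem_subgroupOf.2 (mem_comap.2 (he ▸ A.one_mem))
  have hquot : IsSigmaIGroup σ i (E ⧸ ((A.comap π).subgroupOf E).normalCore) := by
    refine IsSigmaNumber.of_dvd hD ?_
    calc Nat.card (E ⧸ ((A.comap π).subgroupOf E).normalCore)
        = ((A.comap π).subgroupOf E).normalCore.index := (index_eq_card _).symm
      _ ∣ (π.comp E.subtype).ker.index := index_dvd_of_le hker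
      _ = Nat.card (π.comp E.subtype).range := index_ker _
      _ ∣ Nat.card D := card_dvd_of_le (by
          rintro _ ⟨e, rfl⟩
          exact mem_comap.1 e.2)
  exact hPT E _ (comap_mono hAD)
    (isSigmaPermutable_of_isSigmaIGroup_quotient_normalCore hσ hquot)
    isSigmaPermutable_of_normal

theorem map_le_normalizer_of_isSigmaPermutable_comap (hσ : IsPrimePartition σ) {π : G →* Q}
    (hπ : Function.Surjective π) {D : Subgroup Q} [D.Normal] (hD : IsSigmaIGroup σ i D)
    {A : Subgroup Q} (hAD : A ≤ D) (hA : IsSigmaPermutable σ (A.comap π)) (hji : j ≠ i)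
    {L : Subgroup G} (hL : IsHallSigmaI σ j L) : L.map π ≤ normalizer (A : Set Q) := by
  have hperm := (hA j L hL).map π
  rw [map_comap_eq_self_of_surjective hπ] at hperm
  refine le_normalizer_of_permutes hAD (disjoint_of_coprime_natCard ?_) hperm
  exact IsSigmaNumber.coprime hD
    ((hL.1.isSigmaComplNumber hσ hji).of_dvd (card_map_dvd L π))

def hallSigmaComplClosure (σ : ι → Set ℕ) (i : ι) (G : Type*) [Group G] : Subgroup G :=
  normalClosure {g | ∃ j ≠ i, ∃ L : Subgroup G, IsHallSigmaI σ j L ∧ g ∈ L}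

instance : (hallSigmaComplClosure σ i G).Normal :=
  normalClosure_normal

theorem hallSigmaComplClosure_le {K : Subgroup G}
    (hK : ∀ j ≠ i, ∀ L : Subgroup G, IsHallSigmaI σ j L → L ≤ K) :
    hallSigmaComplClosure σ i G ≤ K := by
  refine (closure_le _).2 fun g hg => ?_
  obtain ⟨l, ⟨j, hji, L, hL, hl⟩, hconj⟩ := Group.mem_conjugatesOfSet_iff.1 hg
  obtain ⟨u, rfl⟩ := isConj_iff.1 hconj
  exact hK j hji _ (hL.map_equiv (MulAut.conj u)) ⟨l, hl, rfl⟩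

theorem isSigmaNumber_index_hallSigmaComplClosure [Finite G] (hσ : IsPrimePartition σ)
    (hfull : IsSigmaFull σ G) : IsSigmaNumber σ i (hallSigmaComplClosure σ i G).index := by
  intro p hp hpT
  obtain ⟨j, hpj, -⟩ := hσ.existsUnique_mem p hp
  obtain rfl | hji := eq_or_ne j i
  · exact hpj
  obtain ⟨L, hL⟩ := hfull j ⟨p, hp, hpj, hpT.trans (index_dvd_card _)⟩
  have hLT : L ≤ hallSigmaComplClosure σ i G :=
    fun l hl => subset_normalClosure ⟨j, hji, L, hL, hl⟩
  exact absurd hpj (hL.2 p hp (hpT.trans (index_dvd_of_le hLT)))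

end HallClosure

/-- If `G` is a σ-full finite PσT-group, then every quotient `G/R` satisfies
`N_{σ i}` for every `i`. -/
theorem statement_17 {ι : Type*} (σ : ι → Set ℕ) (hσ : IsPrimePartition σ)
    {G : Type*} [Group G] [Finite G]
    (hfull : IsSigmaFull σ G) (hPT : IsPSigmaTGroup σ G)
    (R : Subgroup G) [hR : R.Normal] (i : ι) :
    SatisfiesNSigma σ i (G ⧸ R) := by
  intro N hN _ x hx a ha
  set π : G →* (G ⧸ R) ⧸ N := (QuotientGroup.mk' N).comp (QuotientGroup.mk' R)
  have hπ : Function.Surjective π :=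
    (QuotientGroup.mk'_surjective N).comp (QuotientGroup.mk'_surjective R)
  obtain ⟨_, hD⟩ := normal_and_isSigmaIGroup_sigmaCore (σ := σ) (i := i) (G := (G ⧸ R) ⧸ N)
  have haD : zpowers a ≤ sigmaCore σ i _ := zpowers_le.2 ha
  have hT : hallSigmaComplClosure σ i G ≤ (normalizer (zpowers a : Set _)).comap π :=
    hallSigmaComplClosure_le fun j hji L hL => map_le_iff_le_comap.1 <|
      map_le_normalizer_of_isSigmaPermutable_comap hσ hπ hD haD
        (hPT.isSigmaPermutable_comap hσ π hD haD) hji hL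
  have : ((hallSigmaComplClosure σ i G).map (QuotientGroup.mk' R)).Normal :=
    Normal.map inferInstance _ (QuotientGroup.mk'_surjective R)
  obtain ⟨t, ht, rfl⟩ := mem_of_isSigmaNumber_index
    ((isSigmaNumber_index_hallSigmaComplClosure hσ hfull).of_dvd
      (index_map_dvd _ (QuotientGroup.mk'_surjective R))) hx
  exact (mem_normalizer_iff.1 (hT ht) a).1 (mem_zpowers a)
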